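/- Let Γ be the random bipartite graph. Suppose G is a closed subgroup with Aut(Γ)* ≤ G ≤ S_{l,r}(Γ), and let X be the largest subset of {l,r} such that S_X(Γ)* ⊆ G. Then G ⊆ S_X(Γ)*, and hence G = S_X(Γ)*. -/

import Mathlib

/-! Preamble: bipartite graphs, the random bipartite graph, side-preserving
permutation groups, switches, switch groups, and related notions. -/

/-- A bipartite graph on a vertex type `V`: the sides `left` and `right`
partition `V`, both sides are nonempty, and `adj` (the relation `P₁`) only holds
from `left` to `right`.  The relation `P₂` is the complement of `adj` on
`left × right`. -/
structure BipartiteGraph (V : Type*) where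
  left : Set V
  right : Set V
  adj : V → V → Prop
  left_nonempty : left.Nonempty
  right_nonempty : right.Nonempty
  union_eq : left ∪ right = Set.univ
  disjoint_sides : Disjoint left right
  adj_dom : ∀ a b, adj a b → a ∈ left ∧ b ∈ right

/-- The two sides of a bipartite graph. -/
inductive BSide : Type
  | l : BSide
  | r : BSide
deriving DecidableEq

namespace BipartiteGraph

variable {V : Type*} (Γ : BipartiteGraph V)

/-- The side of the graph indexed by an element of `BSide`. -/
def side : BSide → Set V
  | BSide.l => Γ.left
  | BSide.r => Γ.right

/-- `Γ` is (isomorphic to) the random bipartite graph: it is countable, both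
sides are infinite, and it satisfies the extension properties `Θₙ` for all `n`. -/
structure IsRandom : Prop where
  countable : Countable V
  left_infinite : Γ.left.Infinite
  right_infinite : Γ.right.Infinite
  ext_left : ∀ X₁ X₂ : Finset V, ↑X₁ ⊆ Γ.left → ↑X₂ ⊆ Γ.left → Disjoint X₁ X₂ →
      ∃ v ∈ Γ.right, (∀ x ∈ X₁, Γ.adj x v) ∧ (∀ x ∈ X₂, ¬ Γ.adj x v)
  ext_right : ∀ X₁ X₂ : Finset V, ↑X₁ ⊆ Γ.right → ↑X₂ ⊆ Γ.right → Disjoint X₁ X₂ →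
      ∃ v ∈ Γ.left, (∀ x ∈ X₁, Γ.adj v x) ∧ (∀ x ∈ X₂, ¬ Γ.adj v x)

/-- `Sym_{l,r}(Γ)`: the group of permutations of `V` preserving both sides. -/
def symLR : Subgroup (Equiv.Perm V) where
  carrier := {g | (∀ v, g v ∈ Γ.left ↔ v ∈ Γ.left) ∧ (∀ v, g v ∈ Γ.right ↔ v ∈ Γ.right)}
  one_mem' := ⟨fun _ => Iff.rfl, fun _ => Iff.rfl⟩
  mul_mem' := by
    rintro a b ⟨hal, har⟩ ⟨hbl, hbr⟩
    exact ⟨fun v => (hal (b v)).trans (hbl v), fun v => (har (b v)).trans (hbr v)⟩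
  inv_mem' := by
    rintro a ⟨hal, har⟩
    refine ⟨fun v => ?_, fun v => ?_⟩
    · have h := hal (a⁻¹ v); rw [Equiv.Perm.coe_inv, Equiv.apply_symm_apply] at h; exact h.symm
    · have h := har (a⁻¹ v); rw [Equiv.Perm.coe_inv, Equiv.apply_symm_apply] at h; exact h.symm

/-- The automorphism group of `Γ`: side-preserving permutations preserving `adj`
(and hence both cross-types). -/
def autGroup : Subgroup (Equiv.Perm V) where
  carrier := {g | g ∈ Γ.symLR ∧ ∀ a b, Γ.adj a b ↔ Γ.adj (g a) (g b)}
  one_mem' := ⟨Γ.symLR.one_mem, fun _ _ => Iff.rfl⟩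
  mul_mem' := by
    rintro a b ⟨ha, ha2⟩ ⟨hb, hb2⟩
    exact ⟨mul_mem ha hb, fun x y => (hb2 x y).trans (ha2 (b x) (b y))⟩
  inv_mem' := by
    rintro a ⟨ha, ha2⟩
    refine ⟨inv_mem ha, fun x y => ?_⟩
    have h := ha2 (a⁻¹ x) (a⁻¹ y)
    rw [Equiv.Perm.coe_inv, Equiv.apply_symm_apply, Equiv.apply_symm_apply] at h
    exact h.symm

/-- A permutation `g` is a switch with respect to a set `A` if it preserves the
sides and, for every cross-edge `(a, b)`, the cross-type of `(a, b)` is preserved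
if and only if `|{a, b} ∩ A| ≠ 1`. -/
def IsSwitch (g : Equiv.Perm V) (A : Set V) : Prop :=
  g ∈ Γ.symLR ∧ ∀ a ∈ Γ.left, ∀ b ∈ Γ.right,
    ((Γ.adj a b ↔ Γ.adj (g a) (g b)) ↔ ({a, b} ∩ A : Set V).ncard ≠ 1)

/-- The restriction of a map `g` to a set `S` is a switch with respect to `A`:
the condition of `IsSwitch` holds for all cross-edges inside `S`. -/
def IsSwitchOn (g : V → V) (S : Set V) (A : Set V) : Prop :=
  ∀ a ∈ S ∩ Γ.left, ∀ b ∈ S ∩ Γ.right,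
    ((Γ.adj a b ↔ Γ.adj (g a) (g b)) ↔ ({a, b} ∩ A : Set V).ncard ≠ 1)

/-- The restriction of a map `g` to a set `S` is an isomorphism: `g` preserves
the cross-type of every cross-edge inside `S`. -/
def IsIsoOn (g : V → V) (S : Set V) : Prop :=
  ∀ a ∈ S ∩ Γ.left, ∀ b ∈ S ∩ Γ.right, (Γ.adj a b ↔ Γ.adj (g a) (g b))

end BipartiteGraph

/-- A subgroup of the full symmetric group is closed (in the topology of
pointwise convergence) iff it contains every permutation which agrees with some
member of the subgroup on each finite subset. -/
def IsClosedSubgroup {V : Type*} (G : Subgroup (Equiv.Perm V)) : Prop :=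
  ∀ g : Equiv.Perm V, (∀ F : Finset V, ∃ h ∈ G, ∀ x ∈ F, h x = g x) → g ∈ G

/-- The closed subgroup generated by a set of permutations: the intersection of
all closed subgroups containing the set. -/
def closedClosure {V : Type*} (S : Set (Equiv.Perm V)) : Subgroup (Equiv.Perm V) :=
  sInf {G : Subgroup (Equiv.Perm V) | IsClosedSubgroup G ∧ S ⊆ ↑G}

namespace BipartiteGraph

variable {V : Type*} (Γ : BipartiteGraph V)

/-- The switch group `S_X(Γ)`: the closed subgroup of `Sym_{l,r}(Γ)` generated
by `Aut(Γ)` together with all switches with respect to a single vertex `v ∈ R_i`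
for `i ∈ X`. -/
def switchGroup (X : Set BSide) : Subgroup (Equiv.Perm V) :=
  closedClosure ((Γ.autGroup : Set (Equiv.Perm V)) ∪
    {g | ∃ i ∈ X, ∃ v ∈ Γ.side i, Γ.IsSwitch g {v}})

/-- The group `S_X(Γ)* `: the closed subgroup generated by `S_X(Γ)` together with
a switch `ρ` with respect to the whole side `R_l`. -/
def switchGroupStar (X : Set BSide) : Subgroup (Equiv.Perm V) :=
  closedClosure ((Γ.switchGroup X : Set (Equiv.Perm V)) ∪ {g | Γ.IsSwitch g Γ.left})

/-- Membership in `Aut(Γ)*`, the group of side-preserving permutations which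
either preserve all cross-types on `R_l × R_r` or exchange all cross-types on
`R_l × R_r`. -/
def InAutStar (g : Equiv.Perm V) : Prop :=
  g ∈ Γ.symLR ∧
    ((∀ a ∈ Γ.left, ∀ b ∈ Γ.right, (Γ.adj a b ↔ Γ.adj (g a) (g b))) ∨
     (∀ a ∈ Γ.left, ∀ b ∈ Γ.right, (Γ.adj a b ↔ ¬ Γ.adj (g a) (g b))))

/-- The number of cross-edges of cross-type `P₁` inside the set `S`. -/
noncomputable def edgeCount (S : Set V) : ℕ :=
  {p : V × V | p.1 ∈ S ∧ p.2 ∈ S ∧ Γ.adj p.1 p.2}.ncard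

/-- `g` preserves the parity of cross-types on `S`: the number of `P₁`
cross-edges in `S` is even iff the number of `P₁` cross-edges in `g[S]` is even. -/
def PreservesParityOn (g : V → V) (S : Set V) : Prop :=
  Even (Γ.edgeCount S) ↔ Even (Γ.edgeCount (g '' S))

/-- An `(m × n)`-subgraph of `Γ`: a finite set of vertices with `m` vertices on
the left side and `n` vertices on the right side. -/
def IsMNSubgraph (S : Set V) (m n : ℕ) : Prop :=
  S.Finite ∧ (S ∩ Γ.left).ncard = m ∧ (S ∩ Γ.right).ncard = n

end BipartiteGraph

/-!
Every `g ∈ S_{l,r}(Γ)` is a switch with respect to some set of vertices, recorded by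
`f : V → Bool`: being such a switch is a condition on four vertices at a time, hence closed.
If `f` separates two vertices of a side `i`, then conjugating automorphisms by `g` gives, on every
finite set, the action of a switch at any single vertex of side `i`; these switches therefore lie
in the closed group `G`, and maximality of `X` forces `i ∈ X`. So `f` is constant on the sides
outside `X`, and on each finite set `g` agrees with an automorphism times switches at finitely
many vertices of sides in `X`, possibly times `ρ`; hence `g ∈ S_X(Γ)*`. The automorphisms and
switches needed are produced by back and forth, a graph switched along a function which is
eventually constant on each side being again random.
-/

theorem Set.ncard_pair_inter_ne_one_iff {α : Type*} {a b : α} (hab : a ≠ b) (A : Set α) :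
    ({a, b} ∩ A : Set α).ncard ≠ 1 ↔ (a ∈ A ↔ b ∈ A) := by
  by_cases ha : a ∈ A <;> by_cases hb : b ∈ A <;>
    simp [Set.insert_inter_of_mem, Set.insert_inter_of_notMem, ha, hb, Set.ncard_pair hab]

theorem Bool.xor_eq_xor_iff {x y z w : Bool} : xor x y = xor z w ↔ (x = z ↔ y = w) := by
  cases x <;> cases y <;> cases z <;> cases w <;> decide

theorem closedClosure_le {V : Type*} {S : Set (Equiv.Perm V)} {K : Subgroup (Equiv.Perm V)}
    (hK : IsClosedSubgroup K) (hS : S ⊆ K) : closedClosure S ≤ K :=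
  sInf_le ⟨hK, hS⟩

theorem subset_closedClosure {V : Type*} {S : Set (Equiv.Perm V)} : S ⊆ closedClosure S :=
  fun _ hg => Subgroup.mem_sInf.mpr fun _ hK => hK.2 hg

theorem isClosedSubgroup_closedClosure {V : Type*} (S : Set (Equiv.Perm V)) :
    IsClosedSubgroup (closedClosure S) := fun g hg =>
  Subgroup.mem_sInf.mpr fun K hK => hK.1 g fun F =>
    let ⟨h, hh, hhg⟩ := hg F
    ⟨h, Subgroup.mem_sInf.mp hh K hK, hhg⟩

namespace BipartiteGraph

open Equiv
open scoped Classical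

variable {V W : Type*}

section Sides

variable (Γ : BipartiteGraph V)

theorem mem_left_or_mem_right (v : V) : v ∈ Γ.left ∨ v ∈ Γ.right := by
  simpa only [← Set.mem_union, Γ.union_eq] using Set.mem_univ v

theorem mem_right_iff_notMem_left {v : V} : v ∈ Γ.right ↔ v ∉ Γ.left :=
  ⟨fun hr hl => Set.disjoint_left.mp Γ.disjoint_sides hl hr,
    (Γ.mem_left_or_mem_right v).resolve_left⟩

variable {Γ}

theorem not_adj_of_mem_left {a b : V} (hb : b ∈ Γ.left) : ¬Γ.adj a b :=
  fun h => Γ.mem_right_iff_notMem_left.mp (Γ.adj_dom a b h).2 hb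

theorem mem_symLR_of_left {g : Perm V} (h : ∀ v, g v ∈ Γ.left ↔ v ∈ Γ.left) : g ∈ Γ.symLR :=
  ⟨h, fun v => by simp only [mem_right_iff_notMem_left, h]⟩

theorem mem_side_apply {g : Perm V} (hg : g ∈ Γ.symLR) {i : BSide} {v : V} :
    g v ∈ Γ.side i ↔ v ∈ Γ.side i := by
  cases i
  exacts [hg.1 v, hg.2 v]

theorem mem_sides_of_adj_apply {g : Perm V} (hg : g ∈ Γ.symLR) {a b : V}
    (h : Γ.adj (g a) (g b)) : a ∈ Γ.left ∧ b ∈ Γ.right :=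
  ⟨(hg.1 a).mp (Γ.adj_dom _ _ h).1, (hg.2 b).mp (Γ.adj_dom _ _ h).2⟩

theorem swap_mem_symLR {u u' : V} (hu : u ∈ Γ.left) (hu' : u' ∈ Γ.left) :
    swap u u' ∈ Γ.symLR :=
  mem_symLR_of_left fun v => by
    rw [swap_apply_def]
    split_ifs with h h' <;> simp_all

end Sides

section Transpose

variable (Γ : BipartiteGraph V)

def transpose : BipartiteGraph V where
  left := Γ.right
  right := Γ.left
  adj a b := Γ.adj b a
  left_nonempty := Γ.right_nonempty
  right_nonempty := Γ.left_nonempty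
  union_eq := Set.union_comm Γ.left Γ.right ▸ Γ.union_eq
  disjoint_sides := Γ.disjoint_sides.symm
  adj_dom a b h := (Γ.adj_dom b a h).symm

variable {Γ}

theorem IsRandom.transpose (hΓ : Γ.IsRandom) : Γ.transpose.IsRandom where
  countable := hΓ.countable
  left_infinite := hΓ.right_infinite
  right_infinite := hΓ.left_infinite
  ext_left := hΓ.ext_right
  ext_right := hΓ.ext_left

theorem transpose_symLR : Γ.transpose.symLR = Γ.symLR :=
  Subgroup.ext fun _ => and_comm

theorem transpose_autGroup : Γ.transpose.autGroup = Γ.autGroup :=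
  Subgroup.ext fun g => and_congr (by rw [transpose_symLR]) forall_comm

end Transpose

theorem IsRandom.ext_left_avoiding {Γ : BipartiteGraph V} (hΓ : Γ.IsRandom) (S : Finset V) :
    ∀ X₁ X₂ : Finset V, ↑X₁ ⊆ Γ.left → ↑X₂ ⊆ Γ.left → Disjoint X₁ X₂ →
      ∃ v ∈ Γ.right, v ∉ S ∧ (∀ x ∈ X₁, Γ.adj x v) ∧ ∀ x ∈ X₂, ¬Γ.adj x v := by
  induction S using Finset.induction_on with
  | empty => simpa using hΓ.ext_left
  | insert s S _ ih =>
    intro X₁ X₂ h₁ h₂ hd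
    -- `v` is made to disagree with `s` on a fresh left vertex `x`, forcing `v ≠ s`
    obtain ⟨x, hx, hxX⟩ := hΓ.left_infinite.exists_notMem_finset (X₁ ∪ X₂)
    rw [Finset.mem_union, not_or] at hxX
    by_cases hxs : Γ.adj x s
    · obtain ⟨v, hv, hvS, hv₁, hv₂⟩ := ih X₁ (insert x X₂) h₁
        (by simpa [Set.insert_subset_iff] using ⟨hx, h₂⟩)
        (Finset.disjoint_insert_right.mpr ⟨hxX.1, hd⟩)
      refine ⟨v, hv, ?_, hv₁, fun y hy => hv₂ y (Finset.mem_insert_of_mem hy)⟩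
      rw [Finset.mem_insert, not_or]
      exact ⟨by rintro rfl; exact hv₂ x (Finset.mem_insert_self x X₂) hxs, hvS⟩
    · obtain ⟨v, hv, hvS, hv₁, hv₂⟩ := ih (insert x X₁) X₂
        (by simpa [Set.insert_subset_iff] using ⟨hx, h₁⟩) h₂
        (Finset.disjoint_insert_left.mpr ⟨hxX.2, hd⟩)
      refine ⟨v, hv, ?_, fun y hy => hv₁ y (Finset.mem_insert_of_mem hy), hv₂⟩
      rw [Finset.mem_insert, not_or]
      exact ⟨by rintro rfl; exact hxs (hv₁ x (Finset.mem_insert_self x X₁)), hvS⟩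

theorem IsRandom.ext_right_avoiding {Γ : BipartiteGraph V} (hΓ : Γ.IsRandom) (S : Finset V) :
    ∀ X₁ X₂ : Finset V, ↑X₁ ⊆ Γ.right → ↑X₂ ⊆ Γ.right → Disjoint X₁ X₂ →
      ∃ v ∈ Γ.left, v ∉ S ∧ (∀ x ∈ X₁, Γ.adj v x) ∧ ∀ x ∈ X₂, ¬Γ.adj v x :=
  hΓ.transpose.ext_left_avoiding S

section PartialIso

variable (Γ₁ : BipartiteGraph V) (Γ₂ : BipartiteGraph W)

/-- `s` is the graph of an isomorphism between the subgraphs of `Γ₁` and `Γ₂` induced on its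
two projections. -/
def IsPartialIso (s : Set (V × W)) : Prop :=
  ∀ p ∈ s, ∀ q ∈ s, (p.1 = q.1 ↔ p.2 = q.2) ∧ (p.1 ∈ Γ₁.left ↔ p.2 ∈ Γ₂.left) ∧
    (Γ₁.adj p.1 q.1 ↔ Γ₂.adj p.2 q.2)

variable {Γ₁ Γ₂} {s : Set (V × W)}

theorem IsPartialIso.swap (hs : Γ₁.IsPartialIso Γ₂ s) :
    Γ₂.IsPartialIso Γ₁ (Prod.swap ⁻¹' s) := fun _ hp _ hq =>
  let ⟨h₁, h₂, h₃⟩ := hs _ hp _ hq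
  ⟨h₁.symm, h₂.symm, h₃.symm⟩

theorem IsPartialIso.transpose (hs : Γ₁.IsPartialIso Γ₂ s) :
    Γ₁.transpose.IsPartialIso Γ₂.transpose s := fun p hp q hq =>
  let ⟨h₁, h₂, _⟩ := hs p hp q hq
  ⟨h₁, by simp only [BipartiteGraph.transpose, mem_right_iff_notMem_left, h₂], (hs q hq p hp).2.2⟩

theorem IsPartialIso.mem_right_iff (hs : Γ₁.IsPartialIso Γ₂ s) {p : V × W} (hp : p ∈ s) :
    p.1 ∈ Γ₁.right ↔ p.2 ∈ Γ₂.right := by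
  simp only [mem_right_iff_notMem_left, (hs p hp p hp).2.1]

theorem IsPartialIso.exists_forth_of_mem_left (hs : Γ₁.IsPartialIso Γ₂ s) (hfin : s.Finite)
    (h₂ : Γ₂.IsRandom) {v : V} (hv : v ∈ Γ₁.left) (hvs : ∀ q ∈ s, q.1 ≠ v) :
    ∃ w, Γ₁.IsPartialIso Γ₂ (insert (v, w) s) := by
  set t := hfin.toFinset
  have ht : ∀ {q}, q ∈ t ↔ q ∈ s := hfin.mem_toFinset
  obtain ⟨w, hw, hwt, hw₁, hw₂⟩ := h₂.ext_right_avoiding (t.image Prod.snd)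
    ((t.filter fun q => Γ₁.adj v q.1).image Prod.snd)
    ((t.filter fun q => q.1 ∈ Γ₁.right ∧ ¬Γ₁.adj v q.1).image Prod.snd)
    (by
      simp only [Finset.coe_image, Finset.coe_filter, Set.image_subset_iff]
      exact fun q hq => (hs.mem_right_iff (ht.mp hq.1)).mp (Γ₁.adj_dom _ _ hq.2).2)
    (by
      simp only [Finset.coe_image, Finset.coe_filter, Set.image_subset_iff]
      exact fun q hq => (hs.mem_right_iff (ht.mp hq.1)).mp hq.2.1)
    (by
      simp only [Finset.disjoint_left, Finset.mem_image, Finset.mem_filter]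
      rintro _ ⟨q, ⟨hq, hvq⟩, rfl⟩ ⟨q', ⟨hq', -, hvq'⟩, hqq'⟩
      exact hvq' ((hs q' (ht.mp hq') q (ht.mp hq)).1.mpr hqq' ▸ hvq))
  have hws : ∀ q ∈ s, q.2 ≠ w := fun q hq hqw =>
    hwt (Finset.mem_image.mpr ⟨q, ht.mpr hq, hqw⟩)
  have hvw : ∀ q ∈ s, Γ₁.adj v q.1 ↔ Γ₂.adj w q.2 := fun q hq => by
    by_cases hvq : Γ₁.adj v q.1
    · exact iff_of_true hvq (hw₁ _ (Finset.mem_image_of_mem _ (by simp [ht, hq, hvq])))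
    refine iff_of_false hvq fun hwq => ?_
    rcases Γ₁.mem_left_or_mem_right q.1 with hq₁ | hq₁
    · exact not_adj_of_mem_left (((hs q hq q hq).2.1).mp hq₁) hwq
    · exact hw₂ _ (Finset.mem_image_of_mem _ (by simp [ht, hq, hq₁, hvq])) hwq
  refine ⟨w, fun p hp q hq => ?_⟩
  rcases hp with rfl | hp <;> rcases hq with rfl | hq
  · exact ⟨iff_of_true rfl rfl, iff_of_true hv hw,
      iff_of_false (not_adj_of_mem_left hv) (not_adj_of_mem_left hw)⟩
  · exact ⟨iff_of_false (hvs q hq).symm (hws q hq).symm, iff_of_true hv hw, hvw q hq⟩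
  · exact ⟨iff_of_false (hvs p hp) (hws p hp), (hs p hp p hp).2.1,
      iff_of_false (not_adj_of_mem_left hv) (not_adj_of_mem_left hw)⟩
  · exact hs p hp q hq

theorem IsPartialIso.exists_forth (hs : Γ₁.IsPartialIso Γ₂ s) (hfin : s.Finite)
    (h₂ : Γ₂.IsRandom) (v : V) : ∃ w, Γ₁.IsPartialIso Γ₂ (insert (v, w) s) := by
  by_cases hvs : ∃ q ∈ s, q.1 = v
  · obtain ⟨q, hq, rfl⟩ := hvs
    exact ⟨q.2, by rwa [Prod.mk.eta, Set.insert_eq_of_mem hq]⟩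
  simp only [not_exists, not_and] at hvs
  rcases Γ₁.mem_left_or_mem_right v with hv | hv
  · exact hs.exists_forth_of_mem_left hfin h₂ hv hvs
  · exact (hs.transpose.exists_forth_of_mem_left hfin h₂.transpose hv hvs).imp
      fun _ h => h.transpose

theorem IsPartialIso.exists_back (hs : Γ₁.IsPartialIso Γ₂ s) (hfin : s.Finite)
    (h₁ : Γ₁.IsRandom) (w : W) : ∃ v, Γ₁.IsPartialIso Γ₂ (insert (v, w) s) :=
  (hs.swap.exists_forth (hfin.preimage Prod.swap_injective.injOn) h₁ w).imp fun v h => by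
    convert h.swap using 1
    ext ⟨a, b⟩
    simp [and_comm]

theorem IsPartialIso.exists_equiv {U : Set (V × W)} (hU : Γ₁.IsPartialIso Γ₂ U)
    (hdom : ∀ v, ∃ w, (v, w) ∈ U) (hcod : ∀ w, ∃ v, (v, w) ∈ U) :
    ∃ e : V ≃ W, ∀ v, (v, e v) ∈ U := by
  choose f hf using hdom
  refine ⟨Equiv.ofBijective f ⟨fun a b hab => (hU _ (hf a) _ (hf b)).1.mpr hab, fun w => ?_⟩, hf⟩
  obtain ⟨v, hv⟩ := hcod w
  exact ⟨v, ((hU _ (hf v) _ hv).1.mp rfl)⟩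

theorem IsRandom.exists_equiv_extending (h₁ : Γ₁.IsRandom) (h₂ : Γ₂.IsRandom)
    {s : Finset (V × W)} (hs : Γ₁.IsPartialIso Γ₂ s) :
    ∃ e : V ≃ W, (∀ v, e v ∈ Γ₂.left ↔ v ∈ Γ₁.left) ∧
      (∀ a b, Γ₁.adj a b ↔ Γ₂.adj (e a) (e b)) ∧ ∀ p ∈ s, e p.1 = p.2 := by
  have := h₁.countable
  have := h₂.countable
  let _ : Encodable (V ⊕ W) := Encodable.ofCountable _
  let P := {t : Finset (V × W) // Γ₁.IsPartialIso Γ₂ t}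
  let D : V ⊕ W → Order.Cofinal P
    | .inl v => ⟨{t | ∃ w, (v, w) ∈ t.1}, fun t =>
        let ⟨w, hw⟩ := t.2.exists_forth t.1.finite_toSet h₂ v
        ⟨⟨insert (v, w) t.1, by rwa [Finset.coe_insert]⟩, ⟨w, Finset.mem_insert_self _ _⟩,
          Finset.subset_insert _ _⟩⟩
    | .inr w => ⟨{t | ∃ v, (v, w) ∈ t.1}, fun t =>
        let ⟨v, hv⟩ := t.2.exists_back t.1.finite_toSet h₁ w
        ⟨⟨insert (v, w) t.1, by rwa [Finset.coe_insert]⟩, ⟨v, Finset.mem_insert_self _ _⟩,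
          Finset.subset_insert _ _⟩⟩
  let u := Order.sequenceOfCofinals (⟨s, hs⟩ : P) D
  let U : Set (V × W) := {p | ∃ n, p ∈ (u n).1}
  have mono : Monotone fun n => (u n).1 :=
    (Subtype.mono_coe _).comp (Order.sequenceOfCofinals.monotone _ _)
  have hU : Γ₁.IsPartialIso Γ₂ U := fun p ⟨n, hp⟩ q ⟨m, hq⟩ =>
    (u (max n m)).2 p (mono (le_max_left n m) hp) q (mono (le_max_right n m) hq)
  obtain ⟨e, he⟩ := hU.exists_equiv
    (fun v => (Order.sequenceOfCofinals.encode_mem _ D (.inl v)).imp fun _ h => ⟨_, h⟩)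
    (fun w => (Order.sequenceOfCofinals.encode_mem _ D (.inr w)).imp fun _ h => ⟨_, h⟩)
  exact ⟨e, fun v => ((hU _ (he v) _ (he v)).2.1).symm, fun a b => (hU _ (he a) _ (he b)).2.2,
    fun p hp => ((hU _ (he p.1) p ⟨0, hp⟩).1.mp rfl)⟩

end PartialIso

section Automorphisms

variable {Γ : BipartiteGraph V}

theorem IsRandom.exists_aut_extending (hΓ : Γ.IsRandom) {s : Finset (V × V)}
    (hs : Γ.IsPartialIso Γ s) : ∃ α ∈ Γ.autGroup, ∀ p ∈ s, α p.1 = p.2 :=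
  let ⟨α, hl, hadj, hα⟩ := hΓ.exists_equiv_extending hΓ hs
  ⟨α, ⟨mem_symLR_of_left hl, hadj⟩, hα⟩

theorem IsRandom.exists_aut_mul_eqOn (hΓ : Γ.IsRandom) {φ ψ : Perm V} (hφ : φ ∈ Γ.symLR)
    (hψ : ψ ∈ Γ.symLR) (F : Finset V)
    (hF : ∀ a ∈ F, ∀ b ∈ F, a ∈ Γ.left → b ∈ Γ.right →
      (Γ.adj (φ a) (φ b) ↔ Γ.adj (ψ a) (ψ b))) :
    ∃ α ∈ Γ.autGroup, ∀ x ∈ F, α (φ x) = ψ x := by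
  obtain ⟨α, hα, hαF⟩ := hΓ.exists_aut_extending (s := F.image fun x => (φ x, ψ x)) <| by
    simp only [IsPartialIso, Finset.coe_image, Set.forall_mem_image]
    intro a ha b hb
    refine ⟨by simp, (hφ.1 a).trans (hψ.1 a).symm, ?_⟩
    by_cases hab : a ∈ Γ.left ∧ b ∈ Γ.right
    · exact hF a ha b hb hab.1 hab.2
    · exact iff_of_false (hab ∘ mem_sides_of_adj_apply hφ) (hab ∘ mem_sides_of_adj_apply hψ)
  exact ⟨α, hα, fun x hx => hαF _ (Finset.mem_image_of_mem _ hx)⟩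

theorem isPartialIso_pair_of_mem_left {v z u u' : V} (hv : v ∈ Γ.left) (hz : z ∈ Γ.left)
    (hu : u ∈ Γ.left) (hu' : u' ∈ Γ.left) (hvz : v ≠ z) (huu' : u ≠ u') :
    Γ.IsPartialIso Γ {(v, u), (z, u')} := by
  have hadj : ∀ x y, y ∈ Γ.left → (Γ.adj x y ↔ False) := fun _ _ hy =>
    iff_false_intro (not_adj_of_mem_left hy)
  simp only [IsPartialIso, Set.mem_insert_iff, Set.mem_singleton_iff, forall_eq_or_imp,
    forall_eq, hadj _ _ hv, hadj _ _ hz, hadj _ _ hu, hadj _ _ hu', hv, hz, hu, hu',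
    hvz, huu', hvz.symm, huu'.symm]
  simp

end Automorphisms

section Switch

variable (Γ : BipartiteGraph V)

def switch (f : V → Bool) : BipartiteGraph V where
  left := Γ.left
  right := Γ.right
  adj a b := a ∈ Γ.left ∧ b ∈ Γ.right ∧ (Γ.adj a b ↔ f a = f b)
  left_nonempty := Γ.left_nonempty
  right_nonempty := Γ.right_nonempty
  union_eq := Γ.union_eq
  disjoint_sides := Γ.disjoint_sides
  adj_dom _ _ h := ⟨h.1, h.2.1⟩

variable {Γ}

theorem IsRandom.switch_ext_left (hΓ : Γ.IsRandom) {f : V → Bool} {c : Bool}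
    (hc : {v | v ∈ Γ.right ∧ f v ≠ c}.Finite) (X₁ X₂ : Finset V) (h₁ : ↑X₁ ⊆ Γ.left)
    (h₂ : ↑X₂ ⊆ Γ.left) :
    ∃ v ∈ Γ.right, ∀ x ∈ X₁ ∪ X₂, ((Γ.adj x v ↔ f x = f v) ↔ x ∈ X₁) := by
  have hX : ↑(X₁ ∪ X₂) ⊆ Γ.left := by simpa using ⟨h₁, h₂⟩
  obtain ⟨v, hv, hvc, hv₁, hv₂⟩ := hΓ.ext_left_avoiding hc.toFinset
    ((X₁ ∪ X₂).filter fun x => x ∈ X₁ ↔ f x = c)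
    ((X₁ ∪ X₂).filter fun x => ¬(x ∈ X₁ ↔ f x = c))
    ((Finset.coe_subset.mpr (Finset.filter_subset _ _)).trans hX)
    ((Finset.coe_subset.mpr (Finset.filter_subset _ _)).trans hX)
    (Finset.disjoint_filter_filter_not _ _ _)
  have hfv : f v = c := by simpa [hv] using hvc
  refine ⟨v, hv, fun x hx => ?_⟩
  rw [hfv]
  by_cases hxc : x ∈ X₁ ↔ f x = c
  · have := hv₁ x (Finset.mem_filter.mpr ⟨hx, hxc⟩)
    tauto
  · have := hv₂ x (Finset.mem_filter.mpr ⟨hx, hxc⟩)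
    tauto

theorem IsRandom.switch (hΓ : Γ.IsRandom) {f : V → Bool}
    (hl : ∃ c, {v | v ∈ Γ.left ∧ f v ≠ c}.Finite) (hr : ∃ c, {v | v ∈ Γ.right ∧ f v ≠ c}.Finite) :
    (Γ.switch f).IsRandom where
  countable := hΓ.countable
  left_infinite := hΓ.left_infinite
  right_infinite := hΓ.right_infinite
  ext_left X₁ X₂ h₁ h₂ hd := by
    obtain ⟨v, hv, H⟩ := hΓ.switch_ext_left hr.choose_spec X₁ X₂ h₁ h₂
    refine ⟨v, hv, fun x hx => ⟨h₁ hx, hv, (H x (Finset.mem_union_left _ hx)).mpr hx⟩,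
      fun x hx hxv => Finset.disjoint_left.mp hd ?_ hx⟩
    exact (H x (Finset.mem_union_right _ hx)).mp hxv.2.2
  ext_right X₁ X₂ h₁ h₂ hd := by
    obtain ⟨v, hv, H⟩ := hΓ.transpose.switch_ext_left hl.choose_spec X₁ X₂ h₁ h₂
    replace H : ∀ x ∈ X₁ ∪ X₂, ((Γ.adj v x ↔ f v = f x) ↔ x ∈ X₁) := fun x hx => by
      rw [eq_comm]
      exact H x hx
    refine ⟨v, hv, fun x hx => ⟨hv, h₁ hx, (H x (Finset.mem_union_left _ hx)).mpr hx⟩,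
      fun x hx hxv => Finset.disjoint_left.mp hd ?_ hx⟩
    exact (H x (Finset.mem_union_right _ hx)).mp hxv.2.2

end Switch

section SwitchAlong

variable {Γ : BipartiteGraph V}

variable (Γ) in
/-- `g` is a switch with respect to the set where `f` is `true`. -/
def IsSwitchAlong (g : Perm V) (f : V → Bool) : Prop :=
  g ∈ Γ.symLR ∧ ∀ a ∈ Γ.left, ∀ b ∈ Γ.right, ((Γ.adj a b ↔ Γ.adj (g a) (g b)) ↔ f a = f b)

theorem isSwitch_iff {g : Perm V} {A : Set V} :
    Γ.IsSwitch g A ↔ Γ.IsSwitchAlong g fun x => decide (x ∈ A) := by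
  refine and_congr_right fun _ => forall₂_congr fun a ha => forall₂_congr fun b hb => ?_
  have hab : a ≠ b := fun h => Γ.mem_right_iff_notMem_left.mp (h ▸ hb) ha
  rw [Set.ncard_pair_inter_ne_one_iff hab, decide_eq_decide]

theorem isSwitchAlong_of_mem_autGroup {α : Perm V} (hα : α ∈ Γ.autGroup) :
    Γ.IsSwitchAlong α fun _ => false :=
  ⟨hα.1, fun a _ b _ => iff_of_true (hα.2 a b) rfl⟩

namespace IsSwitchAlong

variable {g g₁ g₂ : Perm V} {f f₁ f₂ : V → Bool}

theorem adj_apply_iff (hg : Γ.IsSwitchAlong g f) {a b : V} (ha : a ∈ Γ.left)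
    (hb : b ∈ Γ.right) : Γ.adj (g a) (g b) ↔ (Γ.adj a b ↔ f a = f b) := by
  have := hg.2 a ha b hb
  tauto

theorem mul (h₁ : Γ.IsSwitchAlong g₁ f₁) (h₂ : Γ.IsSwitchAlong g₂ f₂) :
    Γ.IsSwitchAlong (g₁ * g₂) fun x => xor (f₂ x) (f₁ (g₂ x)) := by
  refine ⟨mul_mem h₁.1 h₂.1, fun a ha b hb => ?_⟩
  have H₁ := h₁.2 (g₂ a) ((h₂.1.1 a).mpr ha) (g₂ b) ((h₂.1.2 b).mpr hb)
  have H₂ := h₂.2 a ha b hb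
  rw [Perm.mul_apply, Perm.mul_apply, Bool.xor_eq_xor_iff, ← H₁, ← H₂]
  tauto

theorem inv (hg : Γ.IsSwitchAlong g f) : Γ.IsSwitchAlong g⁻¹ fun x => f (g⁻¹ x) := by
  refine ⟨inv_mem hg.1, fun a ha b hb => ?_⟩
  have := hg.2 (g⁻¹ a) (((inv_mem hg.1).1 a).mpr ha) (g⁻¹ b) (((inv_mem hg.1).2 b).mpr hb)
  simp only [Perm.coe_inv, Equiv.apply_symm_apply] at this ⊢
  exact Iff.comm.trans this

theorem transpose_iff : Γ.transpose.IsSwitchAlong g f ↔ Γ.IsSwitchAlong g f := by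
  rw [IsSwitchAlong, IsSwitchAlong, transpose_symLR, forall₂_comm]
  exact and_congr_right fun _ => forall₂_congr fun _ _ => forall₂_congr fun _ _ => by
    rw [eq_comm]; rfl

end IsSwitchAlong

theorem isSwitch_transpose {g : Perm V} {A : Set V} :
    Γ.transpose.IsSwitch g A ↔ Γ.IsSwitch g A := by
  rw [isSwitch_iff, isSwitch_iff, IsSwitchAlong.transpose_iff]

variable (Γ) in
def allSwitches : Subgroup (Perm V) where
  carrier := {g | ∃ f, Γ.IsSwitchAlong g f}
  one_mem' := ⟨_, isSwitchAlong_of_mem_autGroup Γ.autGroup.one_mem⟩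
  mul_mem' := fun ⟨_, h₁⟩ ⟨_, h₂⟩ => ⟨_, h₁.mul h₂⟩
  inv_mem' := fun ⟨_, h⟩ => ⟨_, h.inv⟩

theorem allSwitches_le_symLR : Γ.allSwitches ≤ Γ.symLR := fun _ ⟨_, h⟩ => h.1

/-- Whether `g` is a switch can be read off its action on the four vertices `a, b, a₀, b₀`,
for all `a` and `b` (`hcycle`). -/
theorem isClosedSubgroup_allSwitches : IsClosedSubgroup Γ.allSwitches := by
  intro g hg
  obtain ⟨a₀, ha₀⟩ := Γ.left_nonempty
  obtain ⟨b₀, hb₀⟩ := Γ.right_nonempty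
  have hsym : g ∈ Γ.symLR := mem_symLR_of_left fun v => by
    obtain ⟨h, ⟨_, hh⟩, hhg⟩ := hg {v}
    rw [← hhg v (Finset.mem_singleton_self v)]
    exact hh.1.1 v
  let P : V → V → Prop := fun a b => Γ.adj a b ↔ Γ.adj (g a) (g b)
  have hcycle : ∀ a ∈ Γ.left, ∀ b ∈ Γ.right, P a b ↔ (P a b₀ ↔ (P a₀ b ↔ P a₀ b₀)) := by
    intro a ha b hb
    obtain ⟨h, ⟨f, hh⟩, hhg⟩ := hg {a, b, a₀, b₀}
    simp only [Finset.mem_insert, Finset.mem_singleton, forall_eq_or_imp, forall_eq] at hhg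
    simp only [P, ← hhg.1, ← hhg.2.1, ← hhg.2.2.1, ← hhg.2.2.2, hh.2 a ha b hb,
      hh.2 a ha b₀ hb₀, hh.2 a₀ ha₀ b hb, hh.2 a₀ ha₀ b₀ hb₀]
    cases f a <;> cases f b <;> cases f a₀ <;> cases f b₀ <;> decide
  refine ⟨fun x => if x ∈ Γ.left then decide (P x b₀) else decide (P a₀ x ↔ P a₀ b₀),
    hsym, fun a ha b hb => ?_⟩
  simp only [ha, if_true, Γ.mem_right_iff_notMem_left.mp hb, if_false, decide_eq_decide]
  exact hcycle a ha b hb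

theorem switchGroup_le_allSwitches (X : Set BSide) : Γ.switchGroup X ≤ Γ.allSwitches :=
  closedClosure_le isClosedSubgroup_allSwitches <| by
    rintro g (hg | ⟨_, _, _, _, hg⟩)
    · exact ⟨_, isSwitchAlong_of_mem_autGroup hg⟩
    · exact ⟨_, isSwitch_iff.mp hg⟩

theorem IsRandom.exists_isSwitchAlong (hΓ : Γ.IsRandom) {f : V → Bool}
    (hl : ∃ c, {v | v ∈ Γ.left ∧ f v ≠ c}.Finite) (hr : ∃ c, {v | v ∈ Γ.right ∧ f v ≠ c}.Finite) :
    ∃ g, Γ.IsSwitchAlong g f := by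
  obtain ⟨e, hl, hadj, -⟩ := (hΓ.switch hl hr).exists_equiv_extending hΓ (s := ∅)
    (by simp [IsPartialIso])
  refine ⟨e, mem_symLR_of_left hl, fun a ha b hb => ?_⟩
  have := hadj a b
  simp only [BipartiteGraph.switch, ha, hb, true_and] at this
  tauto

theorem IsRandom.exists_isSwitch_singleton (hΓ : Γ.IsRandom) (v : V) :
    ∃ σ, Γ.IsSwitch σ {v} := by
  simp only [isSwitch_iff]
  refine hΓ.exists_isSwitchAlong ⟨false, ?_⟩ ⟨false, ?_⟩ <;>
    exact (Set.finite_singleton v).subset fun x hx => by simpa using hx.2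

theorem IsRandom.exists_isSwitch_left (hΓ : Γ.IsRandom) : ∃ ρ, Γ.IsSwitch ρ Γ.left := by
  simp only [isSwitch_iff]
  refine hΓ.exists_isSwitchAlong ⟨true, by simp⟩ ⟨false, ?_⟩
  simp [Γ.mem_right_iff_notMem_left]

end SwitchAlong

section SwitchGroups

variable {Γ : BipartiteGraph V} {X : Set BSide}

theorem inAutStar_of_mem_autGroup {α : Perm V} (hα : α ∈ Γ.autGroup) : Γ.InAutStar α :=
  ⟨hα.1, .inl fun a _ b _ => hα.2 a b⟩

theorem inAutStar_of_isSwitch_left {ρ : Perm V} (hρ : Γ.IsSwitch ρ Γ.left) : Γ.InAutStar ρ := by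
  refine ⟨hρ.1, .inr fun a ha b hb => ?_⟩
  have := (isSwitch_iff.mp hρ).2 a ha b hb
  simp only [ha, Γ.mem_right_iff_notMem_left.mp hb, decide_true, decide_false] at this
  tauto

theorem switchGroupStar_le {G : Subgroup (Perm V)} (hG : IsClosedSubgroup G)
    (hAut : ∀ g, Γ.InAutStar g → g ∈ G)
    (hX : ∀ i ∈ X, ∀ v ∈ Γ.side i, ∀ t, Γ.IsSwitch t {v} → t ∈ G) :
    Γ.switchGroupStar X ≤ G :=
  closedClosure_le hG <| Set.union_subset
    (closedClosure_le hG <| Set.union_subset (fun _ hα => hAut _ (inAutStar_of_mem_autGroup hα))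
      fun t ⟨i, hi, v, hv, ht⟩ => hX i hi v hv t ht)
    fun _ hρ => hAut _ (inAutStar_of_isSwitch_left hρ)

theorem IsRandom.exists_mem_switchGroup_isSwitchAlong (hΓ : Γ.IsRandom) (C : Finset V)
    (hC : ∀ v ∈ C, ∃ i ∈ X, v ∈ Γ.side i) :
    ∃ h ∈ Γ.switchGroup X, Γ.IsSwitchAlong h fun x => decide (x ∈ C) := by
  induction C using Finset.induction_on with
  | empty => exact ⟨1, one_mem _, by simpa using isSwitchAlong_of_mem_autGroup Γ.autGroup.one_mem⟩
  | insert v C hvC ih =>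
    obtain ⟨h, hmem, hh⟩ := ih fun x hx => hC x (Finset.mem_insert_of_mem hx)
    obtain ⟨i, hi, hv⟩ := hC v (Finset.mem_insert_self v C)
    -- switching at `h v` after `h` amounts to switching additionally at `v`
    obtain ⟨σ, hσ⟩ := hΓ.exists_isSwitch_singleton (h v)
    refine ⟨σ * h, mul_mem (subset_closedClosure (.inr ⟨i, hi, h v, (mem_side_apply hh.1).mpr hv,
      hσ⟩)) hmem, ?_⟩
    convert (isSwitch_iff.mp hσ).mul hh using 2 with x
    by_cases hxv : x = v
    · simp [hxv, hvC]
    · simp [hxv, h.injective.eq_iff]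

theorem IsRandom.exists_mem_switchGroupStar_isSwitchAlong (hΓ : Γ.IsRandom) (C : Finset V)
    (hC : ∀ v ∈ C, ∃ i ∈ X, v ∈ Γ.side i) (ε : Bool) :
    ∃ h ∈ Γ.switchGroupStar X,
      Γ.IsSwitchAlong h fun x => xor (decide (x ∈ C)) (ε && decide (x ∈ Γ.left)) := by
  obtain ⟨h, hmem, hh⟩ := hΓ.exists_mem_switchGroup_isSwitchAlong C hC
  have hmem' : h ∈ Γ.switchGroupStar X := subset_closedClosure (.inl hmem)
  cases ε
  · exact ⟨h, hmem', by simpa using hh⟩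
  · obtain ⟨ρ, hρ⟩ := hΓ.exists_isSwitch_left
    refine ⟨ρ * h, mul_mem (subset_closedClosure (.inr hρ)) hmem', ?_⟩
    convert (isSwitch_iff.mp hρ).mul hh using 2 with x
    simp [hh.1.1 x]

theorem IsRandom.mem_switchGroupStar_of_isSwitchAlong (hΓ : Γ.IsRandom) {g : Perm V}
    {f : V → Bool} (hg : Γ.IsSwitchAlong g f)
    (hconst : ∀ i ∉ X, ∀ x ∈ Γ.side i, ∀ y ∈ Γ.side i, f x = f y) :
    g ∈ Γ.switchGroupStar X := by
  obtain ⟨a₀, ha₀⟩ := Γ.left_nonempty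
  obtain ⟨b₀, hb₀⟩ := Γ.right_nonempty
  refine isClosedSubgroup_closedClosure _ g fun F => ?_
  -- on `F`, `f` is matched by a switch at the vertices where `f` differs from its value at the
  -- base point `a₀` or `b₀` of their side, followed by `ρ` if `f a₀ ≠ f b₀`
  let C := F.filter fun x => f x ≠ f (if x ∈ Γ.left then a₀ else b₀)
  have hC : ∀ v ∈ C, ∃ i ∈ X, v ∈ Γ.side i := by
    intro v hv
    rcases Γ.mem_left_or_mem_right v with hvl | hvr
    · have hne : f v ≠ f a₀ := by simpa [C, hvl] using (Finset.mem_filter.mp hv).2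
      exact ⟨.l, not_not.mp fun hl => hne (hconst _ hl v hvl a₀ ha₀), hvl⟩
    · have hne : f v ≠ f b₀ := by
        simpa [C, Γ.mem_right_iff_notMem_left.mp hvr] using (Finset.mem_filter.mp hv).2
      exact ⟨.r, not_not.mp fun hr => hne (hconst _ hr v hvr b₀ hb₀), hvr⟩
  obtain ⟨h, hmem, hh⟩ := hΓ.exists_mem_switchGroupStar_isSwitchAlong C hC (xor (f a₀) (f b₀))
  have hF : ∀ x ∈ F, xor (decide (x ∈ C)) (xor (f a₀) (f b₀) && decide (x ∈ Γ.left)) =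
      xor (f x) (f b₀) := by
    intro x hx
    by_cases hxl : x ∈ Γ.left
    · simp only [C, Finset.mem_filter, hx, hxl, if_true, true_and, decide_true, Bool.and_true]
      cases f x <;> cases f a₀ <;> cases f b₀ <;> decide
    · simp only [C, Finset.mem_filter, hx, hxl, if_false, true_and, decide_false, Bool.and_false,
        Bool.xor_false]
      cases f x <;> cases f b₀ <;> decide
  obtain ⟨α, hα, hαF⟩ := hΓ.exists_aut_mul_eqOn hh.1 hg.1 F fun a ha b hb hal hbr => by
    rw [hh.adj_apply_iff hal hbr, hg.adj_apply_iff hal hbr, hF a ha, hF b hb, Bool.xor_left_inj]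
  exact ⟨α * h, mul_mem (subset_closedClosure (.inl (subset_closedClosure (.inl hα)))) hmem,
    hαF⟩

end SwitchGroups

section SingleSwitches

variable {Γ : BipartiteGraph V} {G : Subgroup (Perm V)} {g : Perm V} {f : V → Bool}

theorem IsRandom.exists_left_adj_iff_not (hΓ : Γ.IsRandom) (v : V) (F : Finset V) :
    ∃ z ∈ Γ.left, z ∉ F ∧ ∀ y ∈ F, y ∈ Γ.right → (Γ.adj z y ↔ ¬Γ.adj v y) := by
  let R := F.filter (· ∈ Γ.right)
  obtain ⟨z, hz, hzF, h₁, h₂⟩ := hΓ.ext_right_avoiding F (R.filter fun y => ¬Γ.adj v y)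
    (R.filter fun y => ¬¬Γ.adj v y) (fun y hy => by simp_all [R]) (fun y hy => by simp_all [R])
    (Finset.disjoint_filter_filter_not _ _ _)
  refine ⟨z, hz, hzF, fun y hy hyr => ?_⟩
  by_cases hvy : Γ.adj v y
  · exact iff_of_false (h₂ y (by simp [R, hy, hyr, hvy])) (not_not.mpr hvy)
  · exact iff_of_true (h₁ y (by simp [R, hy, hyr, hvy])) hvy

/-- `β` is `g⁻¹ α g` for an automorphism `α` fixing `g '' D` and mapping `g u` to `g u'`: the
complementary adjacencies of `u` and `u'` into `D` are exactly compensated by `f u ≠ f u'`. -/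
theorem IsRandom.exists_mem_apply_eq_and_eqOn (hΓ : Γ.IsRandom) (hAutG : Γ.autGroup ≤ G)
    (hgG : g ∈ G) (hg : Γ.IsSwitchAlong g f) {u u' : V} (hu : u ∈ Γ.left) (hu' : u' ∈ Γ.left)
    (hne : f u ≠ f u') {D : Finset V} (huD : u ∉ D) (hu'D : u' ∉ D)
    (hD : ∀ y ∈ D, y ∈ Γ.right → (Γ.adj u y ↔ ¬Γ.adj u' y)) :
    ∃ β ∈ G, β u = u' ∧ ∀ x ∈ D, β x = x := by
  have hfix : ∀ x ∈ D, swap u u' x = x := fun x hx =>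
    swap_apply_of_ne_of_ne (ne_of_mem_of_not_mem hx huD) (ne_of_mem_of_not_mem hx hu'D)
  obtain ⟨α, hα, hαD⟩ := hΓ.exists_aut_mul_eqOn hg.1 (mul_mem hg.1 (swap_mem_symLR hu hu'))
    (insert u D) fun a ha b hb hal hbr => by
      have hbD : b ∈ D := (Finset.mem_insert.mp hb).resolve_left fun h =>
        Γ.mem_right_iff_notMem_left.mp hbr (h ▸ hu)
      rw [Perm.mul_apply, Perm.mul_apply, hfix b hbD]
      rcases Finset.mem_insert.mp ha with rfl | haD
      · have hb' := hD b hbD hbr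
        have hf : f a = f b ↔ ¬f u' = f b := by
          revert hne
          cases f a <;> cases f u' <;> cases f b <;> decide
        rw [swap_apply_left, hg.adj_apply_iff hal hbr, hg.adj_apply_iff hu' hbr]
        tauto
      · rw [hfix a haD]
  refine ⟨g⁻¹ * α * g, mul_mem (mul_mem (inv_mem hgG) (hAutG hα)) hgG, ?_, fun x hx => ?_⟩
  · simp [hαD u (Finset.mem_insert_self u D)]
  · simp [hαD x (Finset.mem_insert_of_mem hx), hfix x hx]

/-- For `z` adjacent into `F` exactly where `v` is not, and `α ∈ Aut(Γ)` mapping `v, z` to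
`u, u'`, the switch `g * α` separates `v` from `z`, so some `w ∈ G` moves `v` to `z`. -/
theorem IsRandom.exists_mem_adj_iff_not_eqOn (hΓ : Γ.IsRandom) (hAutG : Γ.autGroup ≤ G)
    (hgG : g ∈ G) (hg : Γ.IsSwitchAlong g f) {u u' : V} (hu : u ∈ Γ.left) (hu' : u' ∈ Γ.left)
    (hne : f u ≠ f u') {v : V} (hv : v ∈ Γ.left) (F : Finset V) :
    ∃ w ∈ G, (∀ x ∈ F, x ≠ v → w x = x) ∧ ∀ y ∈ F, y ∈ Γ.right → (Γ.adj (w v) y ↔ ¬Γ.adj v y) := by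
  obtain ⟨z, hz, hzF, hzv⟩ := hΓ.exists_left_adj_iff_not v (insert v F)
  have hvz : v ≠ z := fun h => hzF (h ▸ Finset.mem_insert_self v F)
  obtain ⟨α, hα, hαvz⟩ := hΓ.exists_aut_extending (s := {(v, u), (z, u')}) (by
    simpa using isPartialIso_pair_of_mem_left hv hz hu hu' hvz fun h => hne (h ▸ rfl))
  simp only [Finset.mem_insert, Finset.mem_singleton, forall_eq_or_imp, forall_eq] at hαvz
  have hgα : Γ.IsSwitchAlong (g * α) fun x => f (α x) := by
    simpa using hg.mul (isSwitchAlong_of_mem_autGroup hα)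
  obtain ⟨w, hwG, hwv, hwF⟩ := hΓ.exists_mem_apply_eq_and_eqOn hAutG (mul_mem hgG (hAutG hα))
    hgα hv hz (by simpa [hαvz] using hne) (F.notMem_erase v)
    (fun h => hzF (Finset.mem_insert_of_mem (Finset.mem_of_mem_erase h)))
    fun y hy hyr => by
      have := hzv y (Finset.mem_insert_of_mem (Finset.mem_of_mem_erase hy)) hyr
      tauto
  exact ⟨w, hwG, fun x hx hxv => hwF x (Finset.mem_erase.mpr ⟨hxv, hx⟩),
    fun y hy hyr => hwv ▸ hzv y (Finset.mem_insert_of_mem hy) hyr⟩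

theorem IsRandom.isSwitch_mem_of_mem_left (hΓ : Γ.IsRandom) (hG : IsClosedSubgroup G)
    (hAutG : Γ.autGroup ≤ G) (hGsym : G ≤ Γ.symLR) (hgG : g ∈ G) (hg : Γ.IsSwitchAlong g f)
    {u u' : V} (hu : u ∈ Γ.left) (hu' : u' ∈ Γ.left) (hne : f u ≠ f u') {v : V}
    (hv : v ∈ Γ.left) {t : Perm V} (ht : Γ.IsSwitch t {v}) : t ∈ G := by
  refine hG t fun F => ?_
  obtain ⟨w, hwG, hwF, hwv⟩ := hΓ.exists_mem_adj_iff_not_eqOn hAutG hgG hg hu hu' hne hv F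
  -- on `F`, `w` and `t` change the same cross-types
  obtain ⟨γ, hγ, hγF⟩ := hΓ.exists_aut_mul_eqOn (hGsym hwG) ht.1 F fun a ha b hb hal hbr => by
    have hbv : b ≠ v := fun h => Γ.mem_right_iff_notMem_left.mp hbr (h ▸ hv)
    have htab := (isSwitch_iff.mp ht).2 a hal b hbr
    rw [hwF b hb hbv]
    by_cases hav : a = v
    · subst hav
      simp only [Set.mem_singleton_iff, hbv, decide_true, decide_false] at htab
      rw [hwv b hb hbr]
      tauto
    · simp only [Set.mem_singleton_iff, hav, hbv, decide_false] at htab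
      rw [hwF a ha hav]
      tauto
  exact ⟨γ * w, mul_mem (hAutG hγ) hwG, hγF⟩

theorem IsRandom.isSwitch_mem (hΓ : Γ.IsRandom) (hG : IsClosedSubgroup G)
    (hAutG : Γ.autGroup ≤ G) (hGsym : G ≤ Γ.symLR) (hgG : g ∈ G) (hg : Γ.IsSwitchAlong g f)
    {i : BSide} {u u' : V} (hu : u ∈ Γ.side i) (hu' : u' ∈ Γ.side i) (hne : f u ≠ f u') {v : V}
    (hv : v ∈ Γ.side i) {t : Perm V} (ht : Γ.IsSwitch t {v}) : t ∈ G := by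
  cases i
  · exact hΓ.isSwitch_mem_of_mem_left hG hAutG hGsym hgG hg hu hu' hne hv ht
  · rw [← transpose_autGroup] at hAutG
    rw [← transpose_symLR] at hGsym
    exact hΓ.transpose.isSwitch_mem_of_mem_left hG hAutG hGsym hgG
      (IsSwitchAlong.transpose_iff.mpr hg) hu hu' hne hv (isSwitch_transpose.mpr ht)

end SingleSwitches

end BipartiteGraph

/-- **Theorem 5.1.** Suppose `G` is a closed subgroup with
`Aut(Γ)* ≤ G ≤ S_{l,r}(Γ)`, and let `X` be the largest subset of `{l, r}` such
that `S_X(Γ)* ⊆ G`.  Then `G ⊆ S_X(Γ)*`, and hence `G = S_X(Γ)*`. -/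
theorem closed_subgroup_of_switchGroup_lr {V : Type*} (Γ : BipartiteGraph V)
    (hΓ : Γ.IsRandom) (G : Subgroup (Equiv.Perm V)) (hG : IsClosedSubgroup G)
    (hAut : ∀ g : Equiv.Perm V, Γ.InAutStar g → g ∈ G)
    (hle : G ≤ Γ.switchGroup {BSide.l, BSide.r})
    (X : Set BSide) (hX : Γ.switchGroupStar X ≤ G)
    (hXmax : ∀ Y : Set BSide, Γ.switchGroupStar Y ≤ G → Y ⊆ X) :
    G ≤ Γ.switchGroupStar X ∧ G = Γ.switchGroupStar X := by
  have hAutG : Γ.autGroup ≤ G := fun α hα => hAut α (BipartiteGraph.inAutStar_of_mem_autGroup hα)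
  have hGsw : G ≤ Γ.allSwitches := hle.trans (BipartiteGraph.switchGroup_le_allSwitches _)
  have hGsym : G ≤ Γ.symLR := hGsw.trans BipartiteGraph.allSwitches_le_symLR
  have hsub : G ≤ Γ.switchGroupStar X := by
    intro g hg
    obtain ⟨f, hf⟩ := hGsw hg
    refine hΓ.mem_switchGroupStar_of_isSwitchAlong hf fun i hi x hx y hy => ?_
    -- if `f` separates two vertices of side `i`, all switches at single vertices of side `i`
    -- lie in `G`, and maximality of `X` gives `i ∈ X`
    by_contra hne
    refine hi (hXmax {i} (BipartiteGraph.switchGroupStar_le hG hAut fun j hj v hv t ht => ?_) rfl)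
    rw [Set.mem_singleton_iff.mp hj] at hv
    exact hΓ.isSwitch_mem hG hAutG hGsym hg hf hx hy hne hv ht
  exact ⟨hsub, le_antisymm hsub hX⟩
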